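/- arXiv:2006.02603 — 6 statements merged into one kernel-verified Lean document; each statement's English description precedes it below -/
import Mathlib

section
/- Every edge coloring of a complete graph with no rainbow triangle admits a Gallai partition: a partition of the vertex set into at least two parts such that at most two colors appear on edges between parts and only one color appears between each pair of parts. -/
open SimpleGraph Finset

/-- A symmetric edge-coloring function. -/
def IsSym {V : Type*} {α : Type*} (c : V → V → α) : Prop := ∀ u v, c u v = c v u

/-- A rainbow triangle: three vertices whose three connecting edges get three distinct colors. -/
def HasRainbowTriangle {V : Type*} {α : Type*} (c : V → V → α) : Prop :=
  ∃ u v w : V, u ≠ v ∧ u ≠ w ∧ v ≠ w ∧ c u v ≠ c u w ∧ c u v ≠ c v w ∧ c u w ≠ c v w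

/-- A Gallai coloring: symmetric with no rainbow triangle. -/
def IsGallai {V : Type*} {α : Type*} (c : V → V → α) : Prop :=
  IsSym c ∧ ¬ HasRainbowTriangle c

/-- A monochromatic copy of `H` in color `i` in the edge-colored complete graph on `V`. -/
def HasMonoCopyIn {V : Type*} {α : Type*} {m : ℕ} (c : V → V → α)
    (H : SimpleGraph (Fin m)) (i : α) : Prop :=
  ∃ f : Fin m → V, Function.Injective f ∧ ∀ u v, H.Adj u v → c (f u) (f v) = i

/-- A monochromatic copy of `H` in color `i` with all vertices inside the set `S`. -/
def HasMonoCopyOn {V : Type*} {α : Type*} {m : ℕ} (c : V → V → α)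
    (H : SimpleGraph (Fin m)) (i : α) (S : Set V) : Prop :=
  ∃ f : Fin m → V, Function.Injective f ∧ (∀ x, f x ∈ S) ∧
    ∀ u v, H.Adj u v → c (f u) (f v) = i

/-- The kipas K̂₄: the join of a single vertex (vertex 4) with the path 0-1-2-3. -/
def kipas4 : SimpleGraph (Fin 5) :=
  SimpleGraph.fromEdgeSet {s(0,1), s(1,2), s(2,3), s(4,0), s(4,1), s(4,2), s(4,3)}

/-- The path on three vertices. -/
def path3 : SimpleGraph (Fin 3) := SimpleGraph.pathGraph 3

/-- Every Gallai `k`-coloring of the complete graph on `n` vertices contains a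
monochromatic copy of `H`. -/
def gallaiRamseyProp (k n : ℕ) {m : ℕ} (H : SimpleGraph (Fin m)) : Prop :=
  ∀ c : Fin n → Fin n → Fin k, IsGallai c → ∃ i, HasMonoCopyIn c H i

/-- The Gallai-Ramsey number `GR_k(H)`. -/
noncomputable def GR (k : ℕ) {m : ℕ} (H : SimpleGraph (Fin m)) : ℕ :=
  sInf {n | gallaiRamseyProp k n H}


/-!
For colours `p, q`, call `u, w` joined when a path of edges coloured neither `p` nor `q` connects
them. Without rainbow triangles the colour of `uw` is unchanged when `u` moves along such an edge
`uu'` away from the class of `w` (the triangle `u u' w` would otherwise be rainbow), so the colour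
between two classes is constant, and it lies in `{p, q}`. Hence it suffices to find `p, q` with at
least two classes.

This is done by adding one vertex `v` at a time to a set `S` that already has two classes for
some `p, q`. If `v` sees at most two colours `p', q'` on `S`, it is a class on its own for `p', q'`.
Otherwise some class of `S` receives only colours `p, q` from `v`, and stays a class. Indeed, if
`v` were attached to every class by an edge of another colour, then by the triangles through `v`
all these edges would have a single colour, and every edge from `v` with colour in `{p, q}` would
have the colour between its class and any other class, hence a single colour as well.
-/

open Relation

namespace Finpartition

variable {V : Type*} [Fintype V] [DecidableEq V] {s : Setoid V} [DecidableRel s.r]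
  {A B : Finset V} {a b : V}

theorem rel_of_mem_ofSetoid_parts (hA : A ∈ (ofSetoid s).parts) (ha : a ∈ A) (hb : b ∈ A) :
    s a b := by
  rwa [← mem_part_ofSetoid_iff_rel, (ofSetoid s).part_eq_of_mem hA ha]

theorem not_rel_of_mem_ofSetoid_parts (hA : A ∈ (ofSetoid s).parts)
    (hB : B ∈ (ofSetoid s).parts) (hAB : A ≠ B) (ha : a ∈ A) (hb : b ∈ B) : ¬ s a b := by
  rw [← mem_part_ofSetoid_iff_rel, (ofSetoid s).part_eq_of_mem hA ha]
  exact fun hbA => hAB ((ofSetoid s).eq_of_mem_parts hA hB hbA hb)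

theorem one_lt_card_ofSetoid_parts (h : ¬ s a b) : 1 < #(ofSetoid s).parts := by
  refine one_lt_card.2 ⟨_, (ofSetoid s).part_mem.2 (mem_univ a), _,
    (ofSetoid s).part_mem.2 (mem_univ b), fun hab => h ?_⟩
  rw [← mem_part_ofSetoid_iff_rel, hab]
  exact (ofSetoid s).mem_part_self.2 (mem_univ b)

end Finpartition

section GallaiPartition

variable {V α : Type*} {c : V → V → α} {p q : α} {S : Finset V} {a b u v w x y : V}

theorem IsGallai.color_eq_of_ne_of_ne (hc : IsGallai c) (hx : c y w ≠ c x y)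
    (hw : c y w ≠ c x w) : c x y = c x w := by
  by_contra hxy
  refine hc.2 ⟨x, y, w, ?_, ?_, ?_, hxy, hx.symm, hw.symm⟩
  · rintro rfl; exact hw rfl
  · rintro rfl; exact hx (hc.1 _ _)
  · rintro rfl; exact hxy rfl

def AvoidStep (c : V → V → α) (p q : α) (S : Finset V) (u w : V) : Prop :=
  u ∈ S ∧ w ∈ S ∧ c u w ∉ ({p, q} : Set α)

def AvoidReach (c : V → V → α) (p q : α) (S : Finset V) : V → V → Prop :=
  ReflTransGen (AvoidStep c p q S)

theorem AvoidStep.symm (hsym : IsSym c) (h : AvoidStep c p q S u w) : AvoidStep c p q S w u :=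
  ⟨h.2.1, h.1, hsym w u ▸ h.2.2⟩

theorem AvoidReach.symm (hsym : IsSym c) (h : AvoidReach c p q S u w) :
    AvoidReach c p q S w u :=
  ReflTransGen.mono (fun _ _ h => AvoidStep.symm hsym h) _ _ (ReflTransGen.swap _ _ h)

theorem AvoidReach.mem_of_closed {T : Set V}
    (hT : ∀ a ∈ T, ∀ b, AvoidStep c p q S a b → b ∈ T) (h : AvoidReach c p q S u w)
    (hu : u ∈ T) : w ∈ T := by
  induction h with
  | refl => exact hu
  | tail _ hstep ih => exact hT _ ih _ hstep

def AvoidReach.setoid (hsym : IsSym c) (p q : α) (S : Finset V) : Setoid V where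
  r := AvoidReach c p q S
  iseqv := ⟨fun _ => .refl, AvoidReach.symm hsym, ReflTransGen.trans⟩

theorem color_mem_of_not_avoidReach (hu : u ∈ S) (hw : w ∈ S) (h : ¬ AvoidReach c p q S u w) :
    c u w ∈ ({p, q} : Set α) := by
  by_contra hne
  exact h (.single ⟨hu, hw, hne⟩)

theorem color_eq_of_avoidReach (hc : IsGallai c) (hw : w ∈ S)
    (huw : ¬ AvoidReach c p q S u w) (h : AvoidReach c p q S u x) : c x w = c u w := by
  induction h with
  | refl => rfl
  | @tail y z hy hstep ih =>
    obtain ⟨hyS, hzS, hyz⟩ := hstep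
    have hwy := color_mem_of_not_avoidReach hw hyS fun h => huw (hy.trans (h.symm hc.1))
    have hwz := color_mem_of_not_avoidReach hw hzS fun h =>
      huw ((hy.tail ⟨hyS, hzS, hyz⟩).trans (h.symm hc.1))
    rw [← ih, hc.1 z, hc.1 y]
    exact (hc.color_eq_of_ne_of_ne (ne_of_mem_of_not_mem hwy hyz).symm
      (ne_of_mem_of_not_mem hwz hyz).symm).symm

theorem color_eq_of_avoidReach_of_avoidReach (hc : IsGallai c) (hu : u ∈ S) (hw : w ∈ S)
    (huw : ¬ AvoidReach c p q S u w) (hx : AvoidReach c p q S u x) (hy : AvoidReach c p q S w y) :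
    c x y = c u w := by
  have hyS : y ∈ S := hy.mem_of_closed (fun _ _ _ h => h.2.1) hw
  calc c x y = c u y := color_eq_of_avoidReach hc hyS (fun h => huw (h.trans (hy.symm hc.1))) hx
    _ = c y u := hc.1 u y
    _ = c w u := color_eq_of_avoidReach hc hu (fun h => huw (h.symm hc.1)) hy
    _ = c u w := hc.1 w u

theorem exists_not_avoidReach_of_not_avoidReach (hsym : IsSym c) (hx : x ∈ S) (hy : y ∈ S)
    (hxy : ¬ AvoidReach c p q S x y) (u : V) : ∃ w ∈ S, ¬ AvoidReach c p q S u w := by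
  by_cases hux : AvoidReach c p q S u x
  · exact ⟨y, hy, fun huy => hxy ((hux.symm hsym).trans huy)⟩
  · exact ⟨x, hx, hux⟩

theorem color_eq_of_not_mem_of_attached (hc : IsGallai c)
    (hatt : ∀ u ∈ S, ∃ u' ∈ S, AvoidReach c p q S u u' ∧ c v u' ∉ ({p, q} : Set α))
    (hout : ∀ u, ∃ w ∈ S, ¬ AvoidReach c p q S u w) (ha : a ∈ S) (hb : b ∈ S)
    (hva : c v a ∉ ({p, q} : Set α)) (hvb : c v b ∉ ({p, q} : Set α)) : c v a = c v b := by
  have across : ∀ {a b}, a ∈ S → b ∈ S → ¬ AvoidReach c p q S a b →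
      c v a ∉ ({p, q} : Set α) → c v b ∉ ({p, q} : Set α) → c v a = c v b := by
    intro a b ha hb hab hva hvb
    have hab := color_mem_of_not_avoidReach ha hb hab
    exact hc.color_eq_of_ne_of_ne (ne_of_mem_of_not_mem hab hva) (ne_of_mem_of_not_mem hab hvb)
  by_cases hab : AvoidReach c p q S a b
  · obtain ⟨w, hw, haw⟩ := hout a
    obtain ⟨w', hw', hww', hvw'⟩ := hatt w hw
    have haw' : ¬ AvoidReach c p q S a w' := fun h => haw (h.trans (hww'.symm hc.1))
    have hbw' : ¬ AvoidReach c p q S b w' := fun h => haw' (hab.trans h)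
    exact (across ha hw' haw' hva hvw').trans (across hb hw' hbw' hvb hvw').symm
  · exact across ha hb hab hva hvb

theorem color_eq_of_mem_of_attached (hc : IsGallai c)
    (hatt : ∀ u ∈ S, ∃ u' ∈ S, AvoidReach c p q S u u' ∧ c v u' ∉ ({p, q} : Set α))
    (hout : ∀ u, ∃ w ∈ S, ¬ AvoidReach c p q S u w) (ha : a ∈ S) (hb : b ∈ S)
    (hva : c v a ∈ ({p, q} : Set α)) (hvb : c v b ∈ ({p, q} : Set α)) : c v a = c v b := by
  have across : ∀ {a w}, a ∈ S → w ∈ S → ¬ AvoidReach c p q S a w →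
      c v a ∈ ({p, q} : Set α) → c a w = c v a := by
    intro a w ha hw haw hva
    obtain ⟨w', hw', hww', hvw'⟩ := hatt w hw
    have haw' := color_mem_of_not_avoidReach ha hw' fun h => haw (h.trans (hww'.symm hc.1))
    calc c a w = c w a := hc.1 a w
      _ = c w' a := (color_eq_of_avoidReach hc ha (fun h => haw (h.symm hc.1)) hww').symm
      _ = c a w' := hc.1 w' a
      _ = c a v := hc.color_eq_of_ne_of_ne (ne_of_mem_of_not_mem haw' (hc.1 w' v ▸ hvw')).symm
          (ne_of_mem_of_not_mem (hc.1 v a ▸ hva) (hc.1 w' v ▸ hvw')).symm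
      _ = c v a := hc.1 a v
  obtain ⟨w, hw, haw⟩ := hout a
  by_cases hab : AvoidReach c p q S a b
  · have hbw : ¬ AvoidReach c p q S b w := fun h => haw (hab.trans h)
    rw [← across ha hw haw hva, ← across hb hw hbw hvb, color_eq_of_avoidReach hc hw haw hab]
  · rw [← across ha hb hab hva, ← across hb ha (fun h => hab (h.symm hc.1)) hvb, hc.1]

theorem exists_unattached (hc : IsGallai c) (hx : x ∈ S) (hy : y ∈ S)
    (hxy : ¬ AvoidReach c p q S x y)
    (hv : ∀ p' q' : α, ∃ u ∈ S, c v u ∉ ({p', q'} : Set α)) :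
    ∃ u ∈ S, ∀ u' ∈ S, AvoidReach c p q S u u' → c v u' ∈ ({p, q} : Set α) := by
  by_contra! hatt
  have hout := exists_not_avoidReach_of_not_avoidReach hc.1 hx hy hxy
  obtain ⟨u, hu, hvu⟩ := hv p q
  obtain ⟨a, ha, hva⟩ := hv (c v u) p
  obtain ⟨b, hb, hvb⟩ := hv (c v u) q
  simp only [Set.mem_insert_iff, Set.mem_singleton_iff, not_or] at hva hvb
  have haq : c v a = q := by
    by_contra h
    exact hva.1 (color_eq_of_not_mem_of_attached hc hatt hout ha hu (by simp [hva.2, h]) hvu)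
  have hbp : c v b = p := by
    by_contra h
    exact hvb.1 (color_eq_of_not_mem_of_attached hc hatt hout hb hu (by simp [hvb.2, h]) hvu)
  exact hva.2 ((color_eq_of_mem_of_attached hc hatt hout ha hb (by simp [haq])
    (by simp [hbp])).trans hbp)

section Insert

variable [DecidableEq V]

theorem not_avoidReach_insert_of_unattached (hsym : IsSym c) (hu : u ∈ S)
    (huw : ¬ AvoidReach c p q S u w)
    (hun : ∀ u' ∈ S, AvoidReach c p q S u u' → c v u' ∈ ({p, q} : Set α)) :
    ¬ AvoidReach c p q (insert v S) u w := by
  refine fun h => huw (h.mem_of_closed (T := {u' | u' ∈ S ∧ AvoidReach c p q S u u'}) ?_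
    ⟨hu, .refl⟩).2
  rintro a ⟨haS, hua⟩ b ⟨-, hbS, hab⟩
  rcases mem_insert.1 hbS with rfl | hbS
  · exact absurd (hun a haS hua) (hsym a b ▸ hab)
  · by_cases hub : AvoidReach c p q S u b
    · exact ⟨hbS, hub⟩
    · exact absurd (color_mem_of_not_avoidReach haS hbS fun h => hub (hua.trans h)) hab

theorem not_avoidReach_insert_self (hvS : v ∉ S) (hw : w ∈ S)
    (hv : ∀ u ∈ S, c v u ∈ ({p, q} : Set α)) : ¬ AvoidReach c p q (insert v S) v w := by
  refine fun h => hvS (h.mem_of_closed (T := {v}) ?_ rfl ▸ hw)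
  rintro a rfl b ⟨-, hbS, hvb⟩
  rcases mem_insert.1 hbS with rfl | hbS
  · rfl
  · exact absurd (hv b hbS) hvb

theorem exists_not_avoidReach (hc : IsGallai c) (S : Finset V) (hS : S.Nontrivial) :
    ∃ p q : α, ∃ x ∈ S, ∃ y ∈ S, ¬ AvoidReach c p q S x y := by
  induction S using Finset.induction_on with
  | empty => exact absurd hS not_nontrivial_empty
  | insert v S hvS ih =>
    by_cases hfew : ∃ p q : α, ∀ u ∈ S, c v u ∈ ({p, q} : Set α)
    · obtain ⟨p, q, hpq⟩ := hfew
      obtain ⟨w, hw, hwv⟩ := hS.exists_ne v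
      have hw : w ∈ S := (mem_insert.1 hw).resolve_left hwv
      exact ⟨p, q, v, mem_insert_self v S, w, mem_insert_of_mem hw,
        not_avoidReach_insert_self hvS hw hpq⟩
    · push Not at hfew
      have hS : S.Nontrivial := by
        obtain ⟨a, ha, hva⟩ := hfew (c v v) (c v v)
        obtain ⟨b, hb, hvb⟩ := hfew (c v a) (c v a)
        exact ⟨a, ha, b, hb, fun hab => hvb (.inl (congrArg (c v) hab.symm))⟩
      obtain ⟨p, q, x, hx, y, hy, hxy⟩ := ih hS
      obtain ⟨u, hu, hun⟩ := exists_unattached hc hx hy hxy hfew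
      obtain ⟨w, hw, huw⟩ := exists_not_avoidReach_of_not_avoidReach hc.1 hx hy hxy u
      exact ⟨p, q, u, mem_insert_of_mem hu, w, mem_insert_of_mem hw,
        not_avoidReach_insert_of_unattached hc.1 hu huw hun⟩

end Insert

end GallaiPartition

/-- Gallai's theorem: every edge coloring of a finite complete graph with no rainbow
triangle admits a Gallai partition. -/
theorem gallai_partition {V : Type*} [Fintype V] [DecidableEq V] {α : Type*}
    (c : V → V → α) (hsym : IsSym c) (hnr : ¬ HasRainbowTriangle c)
    (hV : 2 ≤ Fintype.card V) :
    ∃ P : Finpartition (Finset.univ : Finset V),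
      2 ≤ P.parts.card ∧
      (∃ c₁ c₂ : α, ∀ A ∈ P.parts, ∀ B ∈ P.parts, A ≠ B →
        ∀ a ∈ A, ∀ b ∈ B, c a b = c₁ ∨ c a b = c₂) ∧
      (∀ A ∈ P.parts, ∀ B ∈ P.parts, A ≠ B →
        ∃ d : α, ∀ a ∈ A, ∀ b ∈ B, c a b = d) := by
  classical
  have hc : IsGallai c := ⟨hsym, hnr⟩
  obtain ⟨p, q, x, -, y, -, hxy⟩ :=
    exists_not_avoidReach hc univ (one_lt_card_iff_nontrivial.1 (by rwa [card_univ]))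
  let P := Finpartition.ofSetoid (AvoidReach.setoid hsym p q univ)
  have hne {A B} (hA : A ∈ P.parts) (hB : B ∈ P.parts) (hAB : A ≠ B) {a b} (ha : a ∈ A)
      (hb : b ∈ B) : ¬ AvoidReach c p q univ a b :=
    Finpartition.not_rel_of_mem_ofSetoid_parts hA hB hAB ha hb
  refine ⟨P, Finpartition.one_lt_card_ofSetoid_parts hxy, ⟨p, q, fun A hA B hB hAB a ha b hb =>
    color_mem_of_not_avoidReach (mem_univ a) (mem_univ b) (hne hA hB hAB ha hb)⟩,
    fun A hA B hB hAB => ?_⟩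
  obtain ⟨a₀, ha₀⟩ := P.nonempty_of_mem_parts hA
  obtain ⟨b₀, hb₀⟩ := P.nonempty_of_mem_parts hB
  exact ⟨c a₀ b₀, fun a ha b hb => color_eq_of_avoidReach_of_avoidReach hc (mem_univ a₀)
    (mem_univ b₀) (hne hA hB hAB ha₀ hb₀) (Finpartition.rel_of_mem_ofSetoid_parts hA ha₀ ha)
    (Finpartition.rel_of_mem_ofSetoid_parts hB hb₀ hb)⟩
end

section
/- If in an edge-colored complete graph a set R of at least 5 vertices contains no red path P_3, then R contains a blue copy of K̂_4, provided all non-red edges within R are blue (i.e., R is 2-colored red/blue). -/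
open SimpleGraph Finset

section Aux

variable {V : Type*} (c : V → V → Fin 2)

private lemma fin2_eq_one {x : Fin 2} (h : x ≠ 0) : x = 1 := by omega

/-- Build a blue kipas from a hub `q` and a blue path `p0-p1-p2-p3`. -/
private lemma buildKipas (hsym : IsSym c) (R : Finset V)
    (p0 p1 p2 p3 q : V)
    (m0 : p0 ∈ R) (m1 : p1 ∈ R) (m2 : p2 ∈ R) (m3 : p3 ∈ R) (mq : q ∈ R)
    (d01 : p0 ≠ p1) (d02 : p0 ≠ p2) (d03 : p0 ≠ p3) (d0q : p0 ≠ q)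
    (d12 : p1 ≠ p2) (d13 : p1 ≠ p3) (d1q : p1 ≠ q)
    (d23 : p2 ≠ p3) (d2q : p2 ≠ q) (d3q : p3 ≠ q)
    (e01 : c p0 p1 = 1) (e12 : c p1 p2 = 1) (e23 : c p2 p3 = 1)
    (eq0 : c q p0 = 1) (eq1 : c q p1 = 1) (eq2 : c q p2 = 1) (eq3 : c q p3 = 1) :
    HasMonoCopyOn c kipas4 1 (R : Set V) := by
  refine ⟨fun i => match i with | 0 => p0 | 1 => p1 | 2 => p2 | 3 => p3 | 4 => q,
    ?_, ?_, ?_⟩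
  · intro u v h
    fin_cases u <;> fin_cases v <;>
      first
        | rfl
        | exact absurd h d01 | exact absurd h.symm d01
        | exact absurd h d02 | exact absurd h.symm d02
        | exact absurd h d03 | exact absurd h.symm d03
        | exact absurd h d0q | exact absurd h.symm d0q
        | exact absurd h d12 | exact absurd h.symm d12
        | exact absurd h d13 | exact absurd h.symm d13
        | exact absurd h d1q | exact absurd h.symm d1q
        | exact absurd h d23 | exact absurd h.symm d23
        | exact absurd h d2q | exact absurd h.symm d2q
        | exact absurd h d3q | exact absurd h.symm d3q
  · intro x
    fin_cases x <;>
      first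
        | exact m0 | exact m1 | exact m2 | exact m3 | exact mq
        | exact Finset.mem_coe.mpr m0 | exact Finset.mem_coe.mpr m1
        | exact Finset.mem_coe.mpr m2 | exact Finset.mem_coe.mpr m3
        | exact Finset.mem_coe.mpr mq
  · intro u v h
    fin_cases u <;> fin_cases v <;>
      simp only [kipas4, SimpleGraph.fromEdgeSet_adj, Set.mem_insert_iff,
        Set.mem_singleton_iff, Sym2.eq_iff] at h <;>
      first
        | (exfalso; revert h; decide)
        | exact e01 | exact e12 | exact e23
        | exact eq0 | exact eq1 | exact eq2 | exact eq3
        | (rw [hsym]; first | exact e01 | exact e12 | exact e23 | exact eq0 | exact eq1 | exact eq2 | exact eq3)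

variable {R : Finset V}

/-- "No red cherry" extracted from the absence of a red `P₃`. -/
private lemma noCherry (hsym : IsSym c)
    (hnored : ¬ HasMonoCopyOn c path3 0 (R : Set V))
    {a b d : V} (ha : a ∈ R) (hb : b ∈ R) (hd : d ∈ R)
    (hab : a ≠ b) (hbd : b ≠ d) (had : a ≠ d)
    (r1 : c a b = 0) (r2 : c b d = 0) : False := by
  apply hnored
  refine ⟨fun i => match i with | 0 => a | 1 => b | 2 => d, ?_, ?_, ?_⟩
  · intro u v h
    fin_cases u <;> fin_cases v <;>
      first
        | rfl
        | exact absurd h hab | exact absurd h.symm hab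
        | exact absurd h hbd | exact absurd h.symm hbd
        | exact absurd h had | exact absurd h.symm had
  · intro x
    fin_cases x <;>
      first
        | exact ha | exact hb | exact hd
        | exact Finset.mem_coe.mpr ha | exact Finset.mem_coe.mpr hb
        | exact Finset.mem_coe.mpr hd
  · intro u v h
    fin_cases u <;> fin_cases v <;>
      simp only [path3, SimpleGraph.pathGraph_adj] at h <;>
      first
        | (exfalso; revert h; decide)
        | exact r1 | exact r2
        | (rw [hsym]; first | exact r1 | exact r2)

/-- If `a-b` is red then every other vertex of `R` is blue to `a`. -/
private lemma blue_of_red (hsym : IsSym c)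
    (hnored : ¬ HasMonoCopyOn c path3 0 (R : Set V))
    {a b x : V} (ha : a ∈ R) (hb : b ∈ R) (hx : x ∈ R)
    (hab : a ≠ b) (hax : a ≠ x) (hbx : b ≠ x)
    (r : c a b = 0) : c a x = 1 := by
  refine fin2_eq_one (fun h0 => ?_)
  exact noCherry c hsym hnored hb ha hx hab.symm hax hbx (by rw [hsym]; exact r) h0

/-- Case where some pair among the five is red. -/
private lemma withRed (hsym : IsSym c)
    (hnored : ¬ HasMonoCopyOn c path3 0 (R : Set V))
    {a b x y z : V}
    (ha : a ∈ R) (hb : b ∈ R) (hx : x ∈ R) (hy : y ∈ R) (hz : z ∈ R)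
    (dab : a ≠ b) (dax : a ≠ x) (day : a ≠ y) (daz : a ≠ z)
    (dbx : b ≠ x) (dby : b ≠ y) (dbz : b ≠ z)
    (dxy : x ≠ y) (dxz : x ≠ z) (dyz : y ≠ z)
    (hab : c a b = 0) : HasMonoCopyOn c kipas4 1 (R : Set V) := by
  have hba : c b a = 0 := by rw [hsym]; exact hab
  have hax' : c a x = 1 := blue_of_red c hsym hnored ha hb hx dab dax dbx hab
  have hay' : c a y = 1 := blue_of_red c hsym hnored ha hb hy dab day dby hab
  have haz' : c a z = 1 := blue_of_red c hsym hnored ha hb hz dab daz dbz hab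
  have hbx' : c b x = 1 := blue_of_red c hsym hnored hb ha hx dab.symm dbx dax hba
  have hby' : c b y = 1 := blue_of_red c hsym hnored hb ha hy dab.symm dby day hba
  have hbz' : c b z = 1 := blue_of_red c hsym hnored hb ha hz dab.symm dbz daz hba
  by_cases hxy : c x y = 0
  · -- hub z, path a-x-b-y
    have hxz' : c x z = 1 := blue_of_red c hsym hnored hx hy hz dxy dxz dyz hxy
    have hyz' : c y z = 1 :=
      blue_of_red c hsym hnored hy hx hz dxy.symm dyz dxz (by rw [hsym]; exact hxy)
    exact buildKipas c hsym R a x b y z ha hx hb hy hz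
      dax dab day daz dbx.symm dxy dxz dby dbz dyz
      hax' (by rw [hsym]; exact hbx') hby'
      (by rw [hsym]; exact haz') (by rw [hsym]; exact hxz')
      (by rw [hsym]; exact hbz') (by rw [hsym]; exact hyz')
  by_cases hxz : c x z = 0
  · -- hub y, path a-x-b-z
    have hxy' : c x y = 1 := blue_of_red c hsym hnored hx hz hy dxz dxy dyz.symm hxz
    have hzy' : c z y = 1 :=
      blue_of_red c hsym hnored hz hx hy dxz.symm dyz.symm dxy (by rw [hsym]; exact hxz)
    exact buildKipas c hsym R a x b z y ha hx hb hz hy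
      dax dab daz day dbx.symm dxz dxy dbz dby dyz.symm
      hax' (by rw [hsym]; exact hbx') hbz'
      (by rw [hsym]; exact hay') (by rw [hsym]; exact hxy')
      (by rw [hsym]; exact hby') (by rw [hsym]; exact hzy')
  by_cases hyz : c y z = 0
  · -- hub x, path a-y-b-z
    have hyx' : c y x = 1 := blue_of_red c hsym hnored hy hz hx dyz dxy.symm dxz.symm hyz
    have hzx' : c z x = 1 :=
      blue_of_red c hsym hnored hz hy hx dyz.symm dxz.symm dxy.symm (by rw [hsym]; exact hyz)
    exact buildKipas c hsym R a y b z x ha hy hb hz hx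
      day dab daz dax dby.symm dyz dxy.symm dbz dbx dxz.symm
      hay' (by rw [hsym]; exact hby') hbz'
      (by rw [hsym]; exact hax') (by rw [hsym]; exact hyx')
      (by rw [hsym]; exact hbx') (by rw [hsym]; exact hzx')
  · -- hub x, path a-y-b-z ; x blue to y and z
    have hxy' : c x y = 1 := fin2_eq_one hxy
    have hxz' : c x z = 1 := fin2_eq_one hxz
    exact buildKipas c hsym R a y b z x ha hy hb hz hx
      day dab daz dax dby.symm dyz dxy.symm dbz dbx dxz.symm
      hay' (by rw [hsym]; exact hby') hbz'
      (by rw [hsym]; exact hax') hxy'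
      (by rw [hsym]; exact hbx') hxz'

end Aux

/-- A set `R` of at least 5 vertices, 2-colored red(0)/blue(1), with no red `P₃`
inside, contains a blue `K̂₄`. -/
theorem blue_kipas_of_no_red_P3 {V : Type*} (c : V → V → Fin 2) (hsym : IsSym c)
    (R : Finset V) (hR : 5 ≤ R.card)
    (hnored : ¬ HasMonoCopyOn c path3 0 (R : Set V)) :
    HasMonoCopyOn c kipas4 1 (R : Set V) := by
  classical
  obtain ⟨s, hsub, hcard⟩ := Finset.exists_subset_card_eq hR
  have hlen : s.toList.length = 5 := by rw [Finset.length_toList, hcard]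
  have hnd : s.toList.Nodup := s.nodup_toList
  have hmem : ∀ x ∈ s.toList, x ∈ R := by
    intro x hx; exact hsub (Finset.mem_toList.mp hx)
  obtain ⟨a, b, x, y, z, hl⟩ : ∃ a b x y z, s.toList = [a, b, x, y, z] := by
    match hls : s.toList, hlen with
    | [a, b, x, y, z], _ => exact ⟨a, b, x, y, z, rfl⟩
  rw [hl] at hnd hmem
  have dab : a ≠ b := by rintro rfl; simp [List.nodup_cons] at hnd
  have dax : a ≠ x := by rintro rfl; simp [List.nodup_cons] at hnd
  have day : a ≠ y := by rintro rfl; simp [List.nodup_cons] at hnd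
  have daz : a ≠ z := by rintro rfl; simp [List.nodup_cons] at hnd
  have dbx : b ≠ x := by rintro rfl; simp [List.nodup_cons] at hnd
  have dby : b ≠ y := by rintro rfl; simp [List.nodup_cons] at hnd
  have dbz : b ≠ z := by rintro rfl; simp [List.nodup_cons] at hnd
  have dxy : x ≠ y := by rintro rfl; simp [List.nodup_cons] at hnd
  have dxz : x ≠ z := by rintro rfl; simp [List.nodup_cons] at hnd
  have dyz : y ≠ z := by rintro rfl; simp [List.nodup_cons] at hnd
  have ha : a ∈ R := hmem a (by simp)
  have hb : b ∈ R := hmem b (by simp)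
  have hx : x ∈ R := hmem x (by simp)
  have hy : y ∈ R := hmem y (by simp)
  have hz : z ∈ R := hmem z (by simp)
  by_cases h1 : c a b = 0
  · exact withRed c hsym hnored ha hb hx hy hz dab dax day daz dbx dby dbz dxy dxz dyz h1
  by_cases h2 : c a x = 0
  · exact withRed c hsym hnored ha hx hb hy hz dax dab day daz dbx.symm dxy dxz dby dbz dyz h2
  by_cases h3 : c a y = 0
  · exact withRed c hsym hnored ha hy hb hx hz day dab dax daz dby.symm dxy.symm dyz dbx dbz dxz h3
  by_cases h4 : c a z = 0
  · exact withRed c hsym hnored ha hz hb hx hy daz dab dax day dbz.symm dxz.symm dyz.symm dbx dby dxy h4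
  by_cases h5 : c b x = 0
  · exact withRed c hsym hnored hb hx ha hy hz dbx dab.symm dby dbz dax.symm dxy dxz day daz dyz h5
  by_cases h6 : c b y = 0
  · exact withRed c hsym hnored hb hy ha hx hz dby dab.symm dbx dbz day.symm dxy.symm dyz dax daz dxz h6
  by_cases h7 : c b z = 0
  · exact withRed c hsym hnored hb hz ha hx hy dbz dab.symm dbx dby daz.symm dxz.symm dyz.symm dax day dxy h7
  by_cases h8 : c x y = 0
  · exact withRed c hsym hnored hx hy ha hb hz dxy dax.symm dbx.symm dxz day.symm dby.symm dyz dab daz dbz h8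
  by_cases h9 : c x z = 0
  · exact withRed c hsym hnored hx hz ha hb hy dxz dax.symm dbx.symm dxy daz.symm dbz.symm dyz.symm dab day dby h9
  by_cases h10 : c y z = 0
  · exact withRed c hsym hnored hy hz ha hb hx dyz day.symm dby.symm dxy.symm daz.symm dbz.symm dxz.symm dab dax dbx h10
  · exact buildKipas c hsym R a b x y z ha hb hx hy hz
      dab dax day daz dbx dby dbz dxy dxz dyz
      (fin2_eq_one h1) (fin2_eq_one h5) (fin2_eq_one h8)
      (by rw [hsym]; exact fin2_eq_one h4) (by rw [hsym]; exact fin2_eq_one h7)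
      (by rw [hsym]; exact fin2_eq_one h9) (by rw [hsym]; exact fin2_eq_one h10)
end

section
/- Let G be a Gallai k-colored complete graph with a Gallai partition into parts V_1,…,V_ℓ whose between-part colors are red and blue, with V_1 a largest part, R the union of parts red-adjacent to V_1 and B the union of parts blue-adjacent to V_1. If the subgraph on R contains no red edge and no red or blue copy of K̂_4 exists, and if the number of parts in R of size ≥ 2 is at most 2, the number of parts in R of size 1 combined with a part of size ≥ 2 is at most 2, then |R| ≤ 2|V_1| whenever |V_1| ≥ 2. -/
open SimpleGraph Finset

lemma blue_kipas {V : Type*} {α : Type*} (c : V → V → α) (hsym : IsSym c) (blue : α)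
    (a b a' b' v : V)
    (hab : a ≠ b) (haa : a ≠ a') (hab' : a ≠ b') (hav : a ≠ v)
    (hba : b ≠ a') (hbb : b ≠ b') (hbv : b ≠ v)
    (hab2 : a' ≠ b') (hav2 : a' ≠ v) (hbv2 : b' ≠ v)
    (h1 : c a b = blue) (h2 : c b a' = blue) (h3 : c a' b' = blue)
    (h4 : c v a = blue) (h5 : c v b = blue) (h6 : c v a' = blue) (h7 : c v b' = blue) :
    HasMonoCopyIn c kipas4 blue := by
  refine ⟨![a, b, a', b', v], ?_, ?_⟩
  · intro x y hxy
    fin_cases x <;> fin_cases y <;> simp_all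
  · intro u w h
    fin_cases u <;> fin_cases w <;> simp [kipas4] at h ⊢ <;>
      first
        | exact h1 | exact h2 | exact h3 | exact h4 | exact h5 | exact h6 | exact h7
        | (rw [hsym]; first | exact h1 | exact h2 | exact h3 | exact h4 | exact h5 | exact h6 | exact h7)

/-- In the Gallai-partition setting of the paper: if the parts constituting `R`
contain at most two parts of size `≥ 2`, at most two singleton parts alongside a part
of size `≥ 2`, `R` has no red edge, the parts of `R` are joined in blue, and there is
no red or blue `K̂₄`, then `|R| ≤ 2|V₁|` whenever `|V₁| ≥ 2`. -/
theorem R_le_two_V1 {V : Type*} [DecidableEq V] {k : ℕ}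
    (c : V → V → Fin k) (hG : IsGallai c)
    (red blue : Fin k) (hrb : red ≠ blue)
    (Ps : Finset (Finset V)) (V1 : Finset V)
    (hdisj : ∀ P ∈ Ps, ∀ Q ∈ Ps, P ≠ Q → Disjoint P Q)
    (hne : ∀ P ∈ Ps, P.Nonempty)
    (hmax : ∀ P ∈ Ps, P.card ≤ V1.card)
    (R : Finset V) (hR : R = Ps.sup id)
    (hbetween : ∀ P ∈ Ps, ∀ Q ∈ Ps, P ≠ Q → ∀ a ∈ P, ∀ b ∈ Q, c a b = blue)
    (hnored : ∀ a ∈ R, ∀ b ∈ R, a ≠ b → c a b ≠ red)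
    (hnoredK : ¬ HasMonoCopyIn c kipas4 red)
    (hnoblueK : ¬ HasMonoCopyIn c kipas4 blue)
    (hY2 : (Ps.filter (fun P => 2 ≤ P.card)).card ≤ 2)
    (hY1 : (∃ P ∈ Ps, 2 ≤ P.card) → (Ps.filter (fun P => P.card = 1)).card ≤ 2)
    (hV1 : 2 ≤ V1.card) :
    R.card ≤ 2 * V1.card := by
    classical
  set big := Ps.filter (fun P => 2 ≤ P.card) with hbig
  set small := Ps.filter (fun P => ¬ 2 ≤ P.card) with hsmall
  have hRcard : R.card = ∑ P ∈ Ps, P.card := by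
    rw [hR, Finset.sup_eq_biUnion]
    exact Finset.card_biUnion (fun P hP Q hQ h => hdisj P hP Q hQ h)
  have hmem : ∀ x ∈ R, ∃ P ∈ Ps, x ∈ P := by
    intro x hx
    rw [hR] at hx
    simpa using (Finset.mem_sup.mp hx)
  have hsmall1 : ∀ P ∈ small, P.card = 1 := by
    intro P hP
    rw [hsmall, Finset.mem_filter] at hP
    have := Finset.card_pos.mpr (hne P hP.1)
    omega
  have hsplit : ∑ P ∈ Ps, P.card = (∑ P ∈ big, P.card) + small.card := by
    rw [← Finset.sum_filter_add_sum_filter_not Ps (fun P => 2 ≤ P.card)]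
    congr 1
    rw [Finset.card_eq_sum_ones]
    exact Finset.sum_congr rfl hsmall1
  have hbigsum : ∑ P ∈ big, P.card ≤ big.card * V1.card := by
    calc ∑ P ∈ big, P.card ≤ ∑ _P ∈ big, V1.card :=
          Finset.sum_le_sum (fun P hP => hmax P (Finset.mem_filter.mp hP).1)
      _ = big.card * V1.card := by rw [Finset.sum_const, smul_eq_mul]
  have hcases : big.card = 0 ∨ big.card = 1 ∨ big.card = 2 := by omega
  rcases hcases with h0 | h1 | h2
  · -- no big parts: all parts singletons, show R.card ≤ 4
    have hbigempty : big = ∅ := Finset.card_eq_zero.mp h0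
    have hall1 : ∀ P ∈ Ps, P.card = 1 := by
      intro P hP
      by_cases h : 2 ≤ P.card
      · exact absurd (Finset.mem_filter.mpr ⟨hP, h⟩) (by rw [← hbig, hbigempty]; simp)
      · have := Finset.card_pos.mpr (hne P hP)
        omega
    have hblueR : ∀ x ∈ R, ∀ y ∈ R, x ≠ y → c x y = blue := by
      intro x hx y hy hxy
      obtain ⟨P, hP, hxP⟩ := hmem x hx
      obtain ⟨Q, hQ, hyQ⟩ := hmem y hy
      by_cases hPQ : P = Q
      · subst hPQ
        exact absurd (Finset.card_le_one.mp (le_of_eq (hall1 P hP)) x hxP y hyQ) hxy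
      · exact hbetween P hP Q hQ hPQ x hxP y hyQ
    have hR4 : R.card ≤ 4 := by
      by_contra hcon
      obtain ⟨t, hts, ht5⟩ := Finset.exists_subset_card_eq (show 5 ≤ R.card by omega)
      set g : Fin 5 → V := fun i => (t.equivFin.symm (Fin.cast ht5.symm i) : V) with hg
      have hginj : Function.Injective g := by
        intro i j hij
        have := Subtype.val_injective hij
        have := t.equivFin.symm.injective this
        exact Fin.cast_injective _ this
      have hgR : ∀ i, g i ∈ R := fun i => hts (t.equivFin.symm (Fin.cast ht5.symm i)).2
      have hgne : ∀ i j : Fin 5, i ≠ j → g i ≠ g j := fun i j hij h => hij (hginj h)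
      exact hnoblueK (blue_kipas c hG.1 blue (g 0) (g 1) (g 2) (g 3) (g 4)
        (hgne 0 1 (by decide)) (hgne 0 2 (by decide)) (hgne 0 3 (by decide))
        (hgne 0 4 (by decide)) (hgne 1 2 (by decide)) (hgne 1 3 (by decide))
        (hgne 1 4 (by decide)) (hgne 2 3 (by decide)) (hgne 2 4 (by decide))
        (hgne 3 4 (by decide))
        (hblueR _ (hgR 0) _ (hgR 1) (hgne 0 1 (by decide)))
        (hblueR _ (hgR 1) _ (hgR 2) (hgne 1 2 (by decide)))
        (hblueR _ (hgR 2) _ (hgR 3) (hgne 2 3 (by decide)))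
        (hblueR _ (hgR 4) _ (hgR 0) (hgne 4 0 (by decide)))
        (hblueR _ (hgR 4) _ (hgR 1) (hgne 4 1 (by decide)))
        (hblueR _ (hgR 4) _ (hgR 2) (hgne 4 2 (by decide)))
        (hblueR _ (hgR 4) _ (hgR 3) (hgne 4 3 (by decide))))
    omega
  · -- exactly one big part
    have hex : ∃ P ∈ Ps, 2 ≤ P.card := by
      obtain ⟨P, hP⟩ := Finset.card_pos.mp (by omega : 0 < big.card)
      have := Finset.mem_filter.mp hP
      exact ⟨P, this.1, this.2⟩
    have hsm2 : small.card ≤ 2 := by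
      have heq : small = Ps.filter (fun P => P.card = 1) := by
        apply Finset.filter_congr
        intro P hP
        have := Finset.card_pos.mpr (hne P hP)
        exact ⟨fun h => by omega, fun h => by omega⟩
      rw [heq]
      exact hY1 hex
    rw [h1, one_mul] at hbigsum
    omega
  · -- two big parts: no other part may exist
    obtain ⟨A, B, hAB, hbigeq⟩ := Finset.card_eq_two.mp h2
    have hA : A ∈ Ps ∧ 2 ≤ A.card := by
      have : A ∈ big := by rw [hbigeq]; simp
      exact Finset.mem_filter.mp this
    have hB : B ∈ Ps ∧ 2 ≤ B.card := by
      have : B ∈ big := by rw [hbigeq]; simp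
      exact Finset.mem_filter.mp this
    have hsm0 : small = ∅ := by
      by_contra hse
      obtain ⟨C, hC⟩ := Finset.nonempty_iff_ne_empty.mpr hse
      have hCm := Finset.mem_filter.mp hC
      have hCA : C ≠ A := fun h => hCm.2 (h ▸ hA.2)
      have hCB : C ≠ B := fun h => hCm.2 (h ▸ hB.2)
      obtain ⟨a, ha, a', ha', haa'⟩ := Finset.one_lt_card.mp hA.2
      obtain ⟨b, hb, b', hb', hbb'⟩ := Finset.one_lt_card.mp hB.2
      obtain ⟨v, hv⟩ := hne C hCm.1
      have hABne : A ≠ B := hAB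
      have dAB := Finset.disjoint_left.mp (hdisj A hA.1 B hB.1 hABne)
      have dCA := Finset.disjoint_left.mp (hdisj C hCm.1 A hA.1 hCA)
      have dCB := Finset.disjoint_left.mp (hdisj C hCm.1 B hB.1 hCB)
      have nab : a ≠ b := by intro h; apply dAB ha; rw [h]; exact hb
      have nab' : a ≠ b' := by intro h; apply dAB ha; rw [h]; exact hb'
      have nav : a ≠ v := by intro h; apply dCA hv; rw [← h]; exact ha
      have nba' : b ≠ a' := by intro h; apply dAB ha'; rw [← h]; exact hb
      have nbv : b ≠ v := by intro h; apply dCB hv; rw [← h]; exact hb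
      have na'b' : a' ≠ b' := by intro h; apply dAB ha'; rw [h]; exact hb'
      have na'v : a' ≠ v := by intro h; apply dCA hv; rw [← h]; exact ha'
      have nb'v : b' ≠ v := by intro h; apply dCB hv; rw [← h]; exact hb'
      exact hnoblueK (blue_kipas c hG.1 blue a b a' b' v
        nab haa' nab' nav nba' hbb' nbv na'b' na'v nb'v
        (hbetween A hA.1 B hB.1 hABne a ha b hb)
        (hbetween B hB.1 A hA.1 (Ne.symm hABne) b hb a' ha')
        (hbetween A hA.1 B hB.1 hABne a' ha' b' hb')
        (hbetween C hCm.1 A hA.1 hCA v hv a ha)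
        (hbetween C hCm.1 B hB.1 hCB v hv b hb)
        (hbetween C hCm.1 A hA.1 hCA v hv a' ha')
        (hbetween C hCm.1 B hB.1 hCB v hv b' hb'))
    rw [hsm0] at hsplit
    simp only [Finset.card_empty, add_zero] at hsplit
    rw [h2] at hbigsum
    omega
end

section
/- In any 2-edge-coloring of a complete graph on a set R with parts V_i, V_j, V_k of size 1 and a part V_s of size at least 2, where all edges between distinct parts among {V_i,V_j,V_k,V_s} are blue except possibly one red edge among the three singletons, the coloring contains a blue copy of K̂_4. -/
open SimpleGraph Finset

/-- Three singleton parts blue-adjacent to a part of size `≥ 2`, with at most one red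
edge among the three singletons, yield a blue `K̂₄` (blue = 1, red = 0). -/
theorem blue_kipas_from_singletons {V : Type*} (c : V → V → Fin 2) (hsym : IsSym c)
    (Vs : Finset V) (hVs : 2 ≤ Vs.card)
    (vi vj vk : V) (hij : vi ≠ vj) (hik : vi ≠ vk) (hjk : vj ≠ vk)
    (hi : vi ∉ Vs) (hj : vj ∉ Vs) (hk : vk ∉ Vs)
    (hblue : ∀ b ∈ Vs, c vi b = 1 ∧ c vj b = 1 ∧ c vk b = 1)
    (hone : (c vi vj = 0 → c vi vk = 1 ∧ c vj vk = 1) ∧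
            (c vi vk = 0 → c vi vj = 1 ∧ c vj vk = 1) ∧
            (c vj vk = 0 → c vi vj = 1 ∧ c vi vk = 1)) :
    HasMonoCopyIn c kipas4 1 := by
  obtain ⟨a, ha, b, hb, hab⟩ := Finset.one_lt_card.mp hVs
  have key : ∀ x y z : V, x ≠ y → x ≠ z → y ≠ z → x ∉ Vs → y ∉ Vs → z ∉ Vs →
      (∀ w ∈ Vs, c x w = 1 ∧ c y w = 1 ∧ c z w = 1) → c z x = 1 → c z y = 1 →
      HasMonoCopyIn c kipas4 1 := by
    intro x y z hxy hxz hyz hx hy hz hB hzx hzy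
    have hxa : x ≠ a := fun h => hx (h ▸ ha)
    have hxb : x ≠ b := fun h => hx (h ▸ hb)
    have hya : y ≠ a := fun h => hy (h ▸ ha)
    have hyb : y ≠ b := fun h => hy (h ▸ hb)
    have hza : z ≠ a := fun h => hz (h ▸ ha)
    have hzb : z ≠ b := fun h => hz (h ▸ hb)
    have hxa1 : c x a = 1 := (hB a ha).1
    have hax1 : c a x = 1 := by rw [hsym]; exact hxa1
    have hay1 : c a y = 1 := by rw [hsym]; exact (hB a ha).2.1
    have hyb1 : c y b = 1 := (hB b hb).2.1
    have hza1 : c z a = 1 := (hB a ha).2.2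
    have hzb1 : c z b = 1 := (hB b hb).2.2
    refine ⟨![x, a, y, b, z], ?_, ?_⟩
    · intro u v huv
      fin_cases u <;> fin_cases v <;> simp_all
    · intro u v huv
      fin_cases u <;> fin_cases v <;> simp [kipas4] at huv ⊢ <;>
        first
        | exact hxa1 | exact hax1 | exact hay1 | exact hyb1
        | exact hza1 | exact hzb1 | exact hzx | exact hzy
        | (rw [hsym]; first
           | exact hxa1 | exact hax1 | exact hay1 | exact hyb1
           | exact hza1 | exact hzb1 | exact hzx | exact hzy)
  have h2 : ∀ t : Fin 2, t = 0 ∨ t = 1 := by decide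
  rcases h2 (c vi vj) with h | h
  · obtain ⟨h1, h2'⟩ := hone.1 h
    exact key vi vj vk hij hik hjk hi hj hk hblue
      (by rw [hsym]; exact h1) (by rw [hsym]; exact h2')
  · rcases h2 (c vi vk) with h' | h'
    · obtain ⟨h1, h2'⟩ := hone.2.1 h'
      exact key vi vk vj hik hij (Ne.symm hjk) hi hk hj
        (fun w hw => ⟨(hblue w hw).1, (hblue w hw).2.2, (hblue w hw).2.1⟩)
        (by rw [hsym]; exact h1) h2'
    · exact key vj vk vi (fun h'' => hjk h'') (Ne.symm hij) (Ne.symm hik) hj hk hi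
        (fun w hw => ⟨(hblue w hw).2.1, (hblue w hw).2.2, (hblue w hw).1⟩) h h'
end

section
/- For every k ≥ 1, there exists a Gallai k-coloring of the complete graph on g(k) vertices with no monochromatic triangle, where g(k) = 5^{k/2} for even k and g(k) = 2·5^{(k-1)/2} for odd k. Consequently GR_k(K_3) ≥ g(k) + 1. -/
open SimpleGraph Finset

namespace GRtest

def pent (a b : Fin 5) : Prop := b = a + 1 ∨ a = b + 1
instance : DecidableRel pent := fun a b => inferInstanceAs (Decidable (_ ∨ _))
lemma pent_symm (a b : Fin 5) : pent a b ↔ pent b a := or_comm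
lemma pent_tri (a b d : Fin 5) (hab : a ≠ b) (had : a ≠ d) (hbd : b ≠ d) :
    ¬ (pent a b ∧ pent a d ∧ pent b d) := by revert hab had hbd; revert a b d; decide
lemma copent_tri (a b d : Fin 5) (hab : a ≠ b) (had : a ≠ d) (hbd : b ≠ d) :
    ¬ (¬ pent a b ∧ ¬ pent a d ∧ ¬ pent b d) := by revert hab had hbd; revert a b d; decide
lemma mkTriangle {V α : Type*} {c : V → V → α} (hs : IsSym c) {i : α} {u v w : V}
    (huv : u ≠ v) (huw : u ≠ w) (hvw : v ≠ w)
    (h1 : c u v = i) (h2 : c u w = i) (h3 : c v w = i) :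
    HasMonoCopyIn c (⊤ : SimpleGraph (Fin 3)) i := by
  refine ⟨![u, v, w], ?_, ?_⟩
  · intro a b hab
    fin_cases a <;> fin_cases b <;> simp_all
  · intro a b hab
    rw [top_adj] at hab
    fin_cases a <;> fin_cases b <;> simp_all
    · exact (hs v u).trans h1
    · exact (hs w u).trans h2
    · exact (hs w v).trans h3
lemma ofTriangle {V α : Type*} {c : V → V → α} {i : α}
    (h : HasMonoCopyIn c (⊤ : SimpleGraph (Fin 3)) i) :
    ∃ u v w : V, u ≠ v ∧ u ≠ w ∧ v ≠ w ∧ c u v = i ∧ c u w = i ∧ c v w = i := by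
  obtain ⟨f, hf, hm⟩ := h
  exact ⟨f 0, f 1, f 2, hf.ne (by decide), hf.ne (by decide), hf.ne (by decide),
    hm 0 1 (by simp), hm 0 2 (by simp), hm 1 2 (by simp)⟩

def GoodCol (k n : ℕ) : Prop :=
  ∃ c : Fin n → Fin n → Fin k,
    IsGallai c ∧ ∀ i, ¬ HasMonoCopyIn c (⊤ : SimpleGraph (Fin 3)) i

lemma norainbow2 {V : Type*} (c : V → V → Fin 2) : ¬ HasRainbowTriangle c := by
  rintro ⟨u, v, w, -, -, -, h1, h2, h3⟩
  have key : ∀ x y z : Fin 2, x ≠ y → x ≠ z → y ≠ z → False := by decide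
  exact key _ _ _ h1 h2 h3

lemma good12 : GoodCol 1 2 := by
  refine ⟨fun _ _ => 0, ⟨fun _ _ => rfl, ?_⟩, ?_⟩
  · rintro ⟨u, v, w, -, -, -, h, -⟩; exact h rfl
  · rintro i ⟨f, hf, -⟩
    have := Fintype.card_le_of_injective f hf
    simp at this

def pentc (a b : Fin 5) : Fin 2 := if pent a b then 0 else 1

lemma good25 : GoodCol 2 5 := by
  refine ⟨pentc, ⟨?_, norainbow2 _⟩, ?_⟩
  · intro a b; simp only [pentc, pent_symm a b]
  · intro i h
    obtain ⟨u, v, w, huv, huw, hvw, h1, h2, h3⟩ := ofTriangle h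
    clear h
    revert h1 h2 h3; revert huv huw hvw; revert i u v w; decide

def KA (k : ℕ) : Fin (k + 2) := ⟨k, by omega⟩
def KB (k : ℕ) : Fin (k + 2) := ⟨k + 1, by omega⟩
def pcol (k : ℕ) (a b : Fin 5) : Fin (k + 2) := if pent a b then KA k else KB k

lemma KA_ne_KB (k : ℕ) : KA k ≠ KB k := by
  simp [KA, KB, Fin.ext_iff]

lemma pcol_symm (k : ℕ) (a b : Fin 5) : pcol k a b = pcol k b a := by
  simp only [pcol, pent_symm a b]

lemma pcol_val (k : ℕ) (a b : Fin 5) : k ≤ (pcol k a b).val := by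
  simp only [pcol]; split <;> simp [KA, KB]

lemma pcol_eq_KA (k : ℕ) (a b : Fin 5) : pcol k a b = KA k ↔ pent a b := by
  simp only [pcol]; split
  · simp_all
  · simp_all [Ne.symm (KA_ne_KB k)]

lemma pcol_cases (k : ℕ) (a b : Fin 5) : pcol k a b = KA k ∨ pcol k a b = KB k := by
  simp only [pcol]; split <;> simp

def blow (k n : ℕ) (c : Fin n → Fin n → Fin k) (p q : Fin 5 × Fin n) : Fin (k + 2) :=
  if p.1 = q.1 then (c p.2 q.2).castLE (by omega) else pcol k p.1 q.1

lemma stepProd (k n : ℕ) (h : GoodCol k n) :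
    ∃ c : (Fin 5 × Fin n) → (Fin 5 × Fin n) → Fin (k + 2),
      IsGallai c ∧ ∀ i, ¬ HasMonoCopyIn c (⊤ : SimpleGraph (Fin 3)) i := by
  obtain ⟨c, ⟨hsym, hrb⟩, hmono⟩ := h
  have c2sym : IsSym (blow k n c) := by
    intro p q
    unfold blow
    by_cases h : p.1 = q.1
    · rw [if_pos h, if_pos h.symm, hsym]
    · rw [if_neg h, if_neg (fun hh => h hh.symm), pcol_symm]
  refine ⟨blow k n c, ⟨c2sym, ?_⟩, ?_⟩
  · rintro ⟨p, q, r, hpq, hpr, hqr, h1, h2, h3⟩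
    by_cases hab : p.1 = q.1
    · by_cases had : p.1 = r.1
      · have hbd : q.1 = r.1 := hab.symm.trans had
        unfold blow at h1 h2 h3
        rw [if_pos hab, if_pos had] at h1
        rw [if_pos hab, if_pos hbd] at h2
        rw [if_pos had, if_pos hbd] at h3
        refine hrb ⟨p.2, q.2, r.2, ?_, ?_, ?_, ?_, ?_, ?_⟩
        · exact fun h => hpq (Prod.ext hab h)
        · exact fun h => hpr (Prod.ext had h)
        · exact fun h => hqr (Prod.ext hbd h)
        all_goals intro h
        · exact h1 (by rw [h])
        · exact h2 (by rw [h])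
        · exact h3 (by rw [h])
      · have hbd : ¬ q.1 = r.1 := fun h => had (hab.trans h)
        unfold blow at h3
        rw [if_neg had, if_neg hbd] at h3
        exact h3 (by rw [hab])
    · by_cases had : p.1 = r.1
      · have hbd : ¬ q.1 = r.1 := fun h => hab (had.trans h.symm)
        unfold blow at h2
        rw [if_neg hab, if_neg hbd] at h2
        exact h2 (by rw [pcol_symm, ← had, pcol_symm])
      · by_cases hbd : q.1 = r.1
        · unfold blow at h1
          rw [if_neg hab, if_neg had] at h1
          exact h1 (by rw [hbd])
        · unfold blow at h1 h2 h3
          rw [if_neg hab] at h1 h2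
          rw [if_neg had] at h1 h3
          rw [if_neg hbd] at h2 h3
          have hKK := KA_ne_KB k
          rcases pcol_cases k p.1 q.1 with e1 | e1 <;>
            rcases pcol_cases k p.1 r.1 with e2 | e2 <;>
            rcases pcol_cases k q.1 r.1 with e3 | e3 <;>
            rw [e1] at h1 h2 <;> rw [e2] at h1 h3 <;> rw [e3] at h2 h3 <;> simp_all
  · rintro i h
    obtain ⟨p, q, r, hpq, hpr, hqr, h1, h2, h3⟩ := ofTriangle h
    by_cases hab : p.1 = q.1
    · by_cases had : p.1 = r.1
      · have hbd : q.1 = r.1 := hab.symm.trans had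
        unfold blow at h1 h2 h3
        rw [if_pos hab] at h1
        rw [if_pos had] at h2
        rw [if_pos hbd] at h3
        refine hmono (c p.2 q.2) (mkTriangle hsym
          (fun h => hpq (Prod.ext hab h)) (fun h => hpr (Prod.ext had h))
          (fun h => hqr (Prod.ext hbd h)) rfl ?_ ?_)
        · exact Fin.castLE_injective _ (h2.trans h1.symm)
        · exact Fin.castLE_injective _ (h3.trans h1.symm)
      · have hv := pcol_val k p.1 r.1
        unfold blow at h1 h2
        rw [if_pos hab] at h1
        rw [if_neg had] at h2
        rw [h2] at hv
        rw [← h1] at hv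
        simp only [Fin.coe_castLE] at hv
        have := (c p.2 q.2).isLt
        omega
    · have hi : k ≤ i.val := by
        have hv := pcol_val k p.1 q.1
        unfold blow at h1
        rw [if_neg hab] at h1
        rw [h1] at hv
        exact hv
      by_cases had : p.1 = r.1
      · unfold blow at h2
        rw [if_pos had] at h2
        rw [← h2] at hi
        simp only [Fin.coe_castLE] at hi
        have := (c p.2 r.2).isLt
        omega
      · by_cases hbd : q.1 = r.1
        · unfold blow at h3
          rw [if_pos hbd] at h3
          rw [← h3] at hi
          simp only [Fin.coe_castLE] at hi
          have := (c q.2 r.2).isLt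
          omega
        · unfold blow at h1 h2 h3
          rw [if_neg hab] at h1
          rw [if_neg had] at h2
          rw [if_neg hbd] at h3
          have hKK := KA_ne_KB k
          rcases pcol_cases k p.1 q.1 with e1 | e1 <;> rw [e1] at h1
          · have hp1 : pent p.1 q.1 := (pcol_eq_KA k _ _).1 e1
            have hp2 : pent p.1 r.1 := (pcol_eq_KA k _ _).1 (h2.trans h1.symm)
            have hp3 : pent q.1 r.1 := (pcol_eq_KA k _ _).1 (h3.trans h1.symm)
            exact pent_tri _ _ _ hab had hbd ⟨hp1, hp2, hp3⟩
          · have hp2 : pcol k p.1 r.1 = KB k := h2.trans h1.symm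
            have hp3 : pcol k q.1 r.1 = KB k := h3.trans h1.symm
            refine copent_tri p.1 q.1 r.1 hab had hbd ⟨?_, ?_, ?_⟩
            · exact fun hp => hKK (((pcol_eq_KA k _ _).2 hp).symm.trans e1)
            · exact fun hp => hKK (((pcol_eq_KA k _ _).2 hp).symm.trans hp2)
            · exact fun hp => hKK (((pcol_eq_KA k _ _).2 hp).symm.trans hp3)



def F : ℕ → ℕ
  | 0 => 2
  | (a+1) => (a+1) * F a + 2

lemma F_pos (a : ℕ) : 2 ≤ F a := by
  cases a with
  | zero => simp [F]
  | succ b => show 2 ≤ (b+1) * F b + 2; omega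

lemma ramseyAux (a : ℕ) : ∀ {V : Type} [DecidableEq V] {α : Type} [DecidableEq α]
    (A : Finset α) (c : V → V → α), A.card ≤ a → IsSym c →
    ∀ (S : Finset V), F a ≤ S.card → (∀ u ∈ S, ∀ v ∈ S, u ≠ v → c u v ∈ A) →
    ∃ i u v w, u ≠ v ∧ u ≠ w ∧ v ≠ w ∧ c u v = i ∧ c u w = i ∧ c v w = i := by
  induction a with
  | zero =>
    intro V _ α _ A c hA hsym S hS hc
    rw [Nat.le_zero, Finset.card_eq_zero] at hA
    subst hA
    have h2 : 1 < S.card := by simp only [F] at hS; omega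
    obtain ⟨u, hu, v, hv, huv⟩ := Finset.one_lt_card.1 h2
    exact absurd (hc u hu v hv huv) (by simp)
  | succ a ih =>
    intro V _ α _ A c hA hsym S hS hc
    have hS1 : 1 ≤ S.card := le_trans (by have := F_pos (a+1); omega) hS
    obtain ⟨v, hv⟩ := Finset.card_pos.1 hS1
    set N := S.erase v with hN
    have hNcard : (a+1) * F a + 1 ≤ N.card := by
      rw [hN, Finset.card_erase_of_mem hv]
      simp only [F] at hS; omega
    have hmaps : ∀ u ∈ N, c v u ∈ A := by
      intro u hu
      have huS := Finset.mem_of_mem_erase hu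
      have huv : u ≠ v := Finset.ne_of_mem_erase hu
      rw [hsym]
      exact hc u huS v hv huv
    have hpig : A.card * F a < N.card := by
      calc A.card * F a ≤ (a+1) * F a := Nat.mul_le_mul_right _ hA
        _ < N.card := by omega
    obtain ⟨i, hiA, hT⟩ :=
      Finset.exists_lt_card_fiber_of_mul_lt_card_of_maps_to hmaps hpig
    set T := N.filter (fun u => c v u = i) with hTdef
    by_cases hedge : ∃ u ∈ T, ∃ w ∈ T, u ≠ w ∧ c u w = i
    · obtain ⟨u, hu, w, hw, huw, hcuw⟩ := hedge
      have huN := Finset.mem_filter.1 hu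
      have hwN := Finset.mem_filter.1 hw
      refine ⟨i, v, u, w, ?_, ?_, huw, ?_, ?_, hcuw⟩
      · exact (Finset.ne_of_mem_erase huN.1).symm
      · exact (Finset.ne_of_mem_erase hwN.1).symm
      · exact huN.2
      · exact hwN.2
    · push_neg at hedge
      refine ih (A.erase i) c ?_ hsym T (le_of_lt hT) ?_
      · rw [Finset.card_erase_of_mem hiA]; omega
      · intro u hu w hw huw
        have huS := Finset.mem_of_mem_erase (Finset.mem_filter.1 hu).1
        have hwS := Finset.mem_of_mem_erase (Finset.mem_filter.1 hw).1
        exact Finset.mem_erase.2 ⟨hedge u hu w hw huw, hc u huS w hwS huw⟩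


lemma stepGood (k n : ℕ) (h : GoodCol k n) : GoodCol (k + 2) (5 * n) := by
  obtain ⟨c2, hg, hm⟩ := stepProd k n h
  have e : Fin (5 * n) ≃ Fin 5 × Fin n := Fintype.equivOfCardEq (by simp)
  refine ⟨fun x y => c2 (e x) (e y), ⟨fun x y => hg.1 _ _, ?_⟩, ?_⟩
  · rintro ⟨u, v, w, huv, huw, hvw, h1, h2, h3⟩
    exact hg.2 ⟨e u, e v, e w, fun h => huv (e.injective h),
      fun h => huw (e.injective h), fun h => hvw (e.injective h), h1, h2, h3⟩
  · rintro i ⟨f, hf, hc⟩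
    exact hm i ⟨fun x => e (f x), e.injective.comp hf, hc⟩

lemma goodAll (m : ℕ) : GoodCol (2 * m + 1) (2 * 5 ^ m) ∧ GoodCol (2 * m + 2) (5 ^ (m + 1)) := by
  induction m with
  | zero => exact ⟨by simpa using good12, by simpa using good25⟩
  | succ m ih =>
    obtain ⟨h1, h2⟩ := ih
    constructor
    · have := stepGood _ _ h1
      rw [show 2 * m + 1 + 2 = 2 * (m + 1) + 1 by ring,
        show 5 * (2 * 5 ^ m) = 2 * 5 ^ (m + 1) by ring] at this
      exact this
    · have := stepGood _ _ h2
      rw [show 2 * m + 2 + 2 = 2 * (m + 1) + 2 by ring,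
        show 5 * 5 ^ (m + 1) = 5 ^ (m + 1 + 1) by ring] at this
      exact this

lemma existsGRP (k : ℕ) : gallaiRamseyProp k (F k) (⊤ : SimpleGraph (Fin 3)) := by
  intro c hc
  have h := ramseyAux k (Finset.univ : Finset (Fin k)) c (by simp) hc.1
    (Finset.univ : Finset (Fin (F k))) (by simp) (fun _ _ _ _ _ => Finset.mem_univ _)
  obtain ⟨i, u, v, w, huv, huw, hvw, h1, h2, h3⟩ := h
  exact ⟨i, mkTriangle hc.1 huv huw hvw h1 h2 h3⟩

lemma lower_bound {k g : ℕ} (hg : GoodCol k g) {n : ℕ}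
    (hn : gallaiRamseyProp k n (⊤ : SimpleGraph (Fin 3))) : g + 1 ≤ n := by
  by_contra hle
  push_neg at hle
  have hng : n ≤ g := by omega
  obtain ⟨c, ⟨hsym, hrb⟩, hmono⟩ := hg
  set c' : Fin n → Fin n → Fin k := fun u v => c (u.castLE hng) (v.castLE hng) with hc'
  have : IsGallai c' := by
    refine ⟨fun u v => hsym _ _, ?_⟩
    rintro ⟨u, v, w, huv, huw, hvw, h1, h2, h3⟩
    exact hrb ⟨u.castLE hng, v.castLE hng, w.castLE hng,
      fun h => huv (Fin.castLE_injective _ h), fun h => huw (Fin.castLE_injective _ h),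
      fun h => hvw (Fin.castLE_injective _ h), h1, h2, h3⟩
  obtain ⟨i, f, hf, hmc⟩ := hn c' this
  exact hmono i ⟨fun x => (f x).castLE hng, (Fin.castLE_injective _).comp hf, hmc⟩

end GRtest

/-- For every `k ≥ 1` there is a Gallai `k`-coloring of the complete graph on `g(k)`
vertices with no monochromatic triangle, where `g(k) = 5^(k/2)` for even `k` and
`g(k) = 2·5^((k-1)/2)` for odd `k`; consequently `GR_k(K₃) ≥ g(k) + 1`. -/


theorem GR_triangle_lower (k : ℕ) (hk : 1 ≤ k) :
    (∃ c : Fin (if Even k then 5 ^ (k / 2) else 2 * 5 ^ ((k - 1) / 2)) →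
         Fin (if Even k then 5 ^ (k / 2) else 2 * 5 ^ ((k - 1) / 2)) → Fin k,
      IsGallai c ∧ ∀ i, ¬ HasMonoCopyIn c (⊤ : SimpleGraph (Fin 3)) i) ∧
    (if Even k then 5 ^ (k / 2) else 2 * 5 ^ ((k - 1) / 2)) + 1 ≤
      GR k (⊤ : SimpleGraph (Fin 3)) := by
  have hgood : GRtest.GoodCol k (if Even k then 5 ^ (k / 2) else 2 * 5 ^ ((k - 1) / 2)) := by
    rcases Nat.even_or_odd k with he | ho
    · obtain ⟨m, hm⟩ := he
      rcases m with _ | m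
      · omega
      · have := (GRtest.goodAll m).2
        rw [if_pos (by exact ⟨m + 1, hm⟩ : Even k)]
        have hk2 : k = 2 * (m + 1) := by omega
        subst hk2
        rw [show 2 * (m + 1) / 2 = m + 1 by omega]
        exact this
    · obtain ⟨m, hm⟩ := ho
      have := (GRtest.goodAll m).1
      rw [if_neg (by simp [Nat.even_iff, hm, Nat.add_mod, Nat.mul_mod])]
      subst hm
      rw [show (2 * m + 1 - 1) / 2 = m by omega]
      exact this
  refine ⟨hgood, ?_⟩
  have hne : {n | gallaiRamseyProp k n (⊤ : SimpleGraph (Fin 3))}.Nonempty :=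
    ⟨GRtest.F k, GRtest.existsGRP k⟩
  have hmem := Nat.sInf_mem hne
  exact GRtest.lower_bound hgood hmem
end

section
/- There exists, for each k ≥ 1 and each 1 ≤ s < k, a Gallai k-coloring of the complete graph on 4·5^{(s-1)/2} vertices (s odd) or 2·5^{s/2} vertices (s even) containing no monochromatic K̂_4 in any color i ∈ {1,…,s} and no monochromatic P_3 in any color j ∈ {s+1,…,k}. -/
open SimpleGraph Finset

def pent (a b : ℕ) : ℕ := if (a + 1) % 5 = b % 5 ∨ (b + 1) % 5 = a % 5 then 0 else 1

lemma pent_le_one (a b : ℕ) : pent a b ≤ 1 := by unfold pent; split <;> simp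

lemma pent_comm (a b : ℕ) : pent a b = pent b a := by unfold pent; exact if_congr or_comm rfl rfl

lemma pent_mod (a b : ℕ) : pent a b = pent (a % 5) (b % 5) := by
  have h1 : (a % 5 + 1) % 5 = (a + 1) % 5 := by omega
  have h2 : (b % 5 + 1) % 5 = (b + 1) % 5 := by omega
  have h3 : a % 5 % 5 = a % 5 := by omega
  have h4 : b % 5 % 5 = b % 5 := by omega
  simp only [pent, h1, h2, h3, h4]

lemma pent_tri (x y z : Fin 5) (hxy : x ≠ y) (hxz : x ≠ z) (hyz : y ≠ z) :
    ¬(pent x.val y.val = pent x.val z.val ∧ pent x.val y.val = pent y.val z.val) := by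
  revert hxy hxz hyz; revert x y z; decide

def dq (b u j : ℕ) : ℕ := u / b / 5 ^ j

def lv (t b u v : ℕ) : ℕ := Nat.findGreatest (fun j => dq b u j ≠ dq b v j) t

def ccv (t b inner u v : ℕ) : ℕ :=
  if u / b = v / b then inner
  else 2 * lv t b u v + pent (dq b u (lv t b u v)) (dq b v (lv t b u v))

lemma fG_congr (p q : ℕ → Prop) [DecidablePred p] [DecidablePred q]
    (h : ∀ j, p j ↔ q j) (n : ℕ) : Nat.findGreatest p n = Nat.findGreatest q n := by
  induction n with
  | zero => rfl
  | succ n ih =>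
    rw [Nat.findGreatest_succ, Nat.findGreatest_succ, ih, if_congr (h _) rfl rfl]

lemma lv_comm (t b u v : ℕ) : lv t b u v = lv t b v u :=
  fG_congr _ _ (fun j => ne_comm) t

lemma dq_succ (b u j : ℕ) : dq b u (j + 1) = dq b u j / 5 := by
  unfold dq; rw [pow_succ, ← Nat.div_div_eq_div_mul]

lemma dq_zero (b u : ℕ) : dq b u 0 = u / b := by simp [dq]

lemma dq_mono {b u v j : ℕ} (h : dq b u j = dq b v j) {j' : ℕ} (hj : j ≤ j') :
    dq b u j' = dq b v j' := by
  obtain ⟨d, rfl⟩ : ∃ d, j' = j + d := ⟨j' - j, by omega⟩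
  have key : ∀ x, dq b x (j + d) = dq b x j / 5 ^ d := by
    intro x
    unfold dq
    rw [pow_add, ← Nat.div_div_eq_div_mul]
  rw [key u, key v, h]

lemma lv_spec {t b u v : ℕ} (hb : 0 < b) (hu : u < b * 5 ^ t) (hv : v < b * 5 ^ t)
    (hne : u / b ≠ v / b) :
    lv t b u v < t ∧ dq b u (lv t b u v) ≠ dq b v (lv t b u v) ∧
      dq b u (lv t b u v + 1) = dq b v (lv t b u v + 1) := by
  have hP0 : dq b u 0 ≠ dq b v 0 := by simpa [dq] using hne
  have hspec : dq b u (lv t b u v) ≠ dq b v (lv t b u v) := by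
    unfold lv
    exact Nat.findGreatest_spec (P := fun j => dq b u j ≠ dq b v j) (Nat.zero_le t) hP0
  have hqu : u / b < 5 ^ t := Nat.div_lt_of_lt_mul hu
  have hqv : v / b < 5 ^ t := Nat.div_lt_of_lt_mul hv
  have hPt : dq b u t = dq b v t := by
    unfold dq; rw [Nat.div_eq_of_lt hqu, Nat.div_eq_of_lt hqv]
  have hle : lv t b u v ≤ t := Nat.findGreatest_le (P := fun j => dq b u j ≠ dq b v j) t
  have hlt : lv t b u v < t := lt_of_le_of_ne hle (by rintro h; rw [h] at hspec; exact hspec hPt)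
  refine ⟨hlt, hspec, ?_⟩
  have hgr := Nat.findGreatest_is_greatest (P := fun j => dq b u j ≠ dq b v j)
    (n := t) (k := lv t b u v + 1) (by unfold lv; omega) hlt
  exact not_ne_iff.mp hgr

lemma dq_congr {b u v : ℕ} (h : u / b = v / b) (j : ℕ) : dq b u j = dq b v j := by
  unfold dq; rw [h]

lemma ccv_comm (t b inner u v : ℕ) : ccv t b inner u v = ccv t b inner v u := by
  unfold ccv
  by_cases h : u / b = v / b
  · rw [if_pos h, if_pos h.symm]
  · rw [if_neg h, if_neg (Ne.symm h), lv_comm, pent_comm]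

lemma ccv_congr_left {b u v : ℕ} (t inner : ℕ) (h : u / b = v / b) (x : ℕ) :
    ccv t b inner u x = ccv t b inner v x := by
  have hd := dq_congr h
  unfold ccv lv
  rw [h]
  by_cases hx : v / b = x / b
  · rw [if_pos hx, if_pos hx]
  · rw [if_neg hx, if_neg hx]
    have hfg : Nat.findGreatest (fun j => dq b u j ≠ dq b x j) t
        = Nat.findGreatest (fun j => dq b v j ≠ dq b x j) t :=
      fG_congr _ _ (fun j => by rw [hd j]) t
    rw [hfg, hd]

lemma ccv_of_ne {t b inner u v : ℕ} (h : u / b ≠ v / b) :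
    ccv t b inner u v = 2 * lv t b u v + pent (dq b u (lv t b u v)) (dq b v (lv t b u v)) := by
  unfold ccv; rw [if_neg h]

lemma ccv_le {t b inner u v : ℕ} (hb : 0 < b) (hu : u < b * 5 ^ t) (hv : v < b * 5 ^ t)
    (hti : 2 * t ≤ inner) : ccv t b inner u v ≤ inner := by
  unfold ccv
  by_cases h : u / b = v / b
  · rw [if_pos h]
  · rw [if_neg h]
    have h1 := (lv_spec hb hu hv h).1
    have h2 := pent_le_one (dq b u (lv t b u v)) (dq b v (lv t b u v))
    omega

lemma tri_sub {t b inner u v w : ℕ} (hb : 0 < b)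
    (hu : u < b * 5 ^ t) (hv : v < b * 5 ^ t) (hw : w < b * 5 ^ t)
    (h12 : u / b ≠ v / b) (h13 : u / b ≠ w / b) (h23 : v / b ≠ w / b)
    (hm2 : lv t b u w ≤ lv t b u v) (hm3 : lv t b v w ≤ lv t b u v) :
    ccv t b inner u v = ccv t b inner u w ∨ ccv t b inner u v = ccv t b inner v w ∨
      ccv t b inner u w = ccv t b inner v w := by
  obtain ⟨hlt1, hne1, heq1⟩ := lv_spec (t := t) hb hu hv h12
  obtain ⟨hlt2, hne2, heq2⟩ := lv_spec (t := t) hb hu hw h13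
  obtain ⟨hlt3, hne3, heq3⟩ := lv_spec (t := t) hb hv hw h23
  rcases eq_or_lt_of_le hm2 with he2 | he2
  · rcases eq_or_lt_of_le hm3 with he3 | he3
    · rw [ccv_of_ne h12, ccv_of_ne h13, ccv_of_ne h23, he2, he3]
      have p1 := pent_le_one (dq b u (lv t b u v)) (dq b v (lv t b u v))
      have p2 := pent_le_one (dq b u (lv t b u v)) (dq b w (lv t b u v))
      have p3 := pent_le_one (dq b v (lv t b u v)) (dq b w (lv t b u v))
      omega
    · have hvw : dq b v (lv t b u v) = dq b w (lv t b u v) :=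
        dq_mono heq3 (by omega)
      left
      rw [ccv_of_ne h12, ccv_of_ne h13, he2, hvw]
  · have huw : dq b u (lv t b u v) = dq b w (lv t b u v) :=
      dq_mono heq2 (by omega)
    rcases eq_or_lt_of_le hm3 with he3 | he3
    · right; left
      rw [ccv_of_ne h12, ccv_of_ne h23, he3, ← huw, pent_comm]
    · have hvw : dq b v (lv t b u v) = dq b w (lv t b u v) :=
        dq_mono heq3 (by omega)
      exact absurd (huw.trans hvw.symm) hne1

lemma ccv_no_rainbow {t b inner u v w : ℕ} (hb : 0 < b)
    (hu : u < b * 5 ^ t) (hv : v < b * 5 ^ t) (hw : w < b * 5 ^ t) :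
    ccv t b inner u v = ccv t b inner u w ∨ ccv t b inner u v = ccv t b inner v w ∨
      ccv t b inner u w = ccv t b inner v w := by
  by_cases h12 : u / b = v / b
  · by_cases h13 : u / b = w / b
    · left; unfold ccv; rw [if_pos h12, if_pos h13]
    · right; right
      exact ccv_congr_left t inner h12 w
  · by_cases h13 : u / b = w / b
    · right; left
      exact (ccv_congr_left t inner h13 v).trans (ccv_comm t b inner w v)
    · by_cases h23 : v / b = w / b
      · left
        exact (ccv_comm t b inner u v).trans
          ((ccv_congr_left t inner h23 u).trans (ccv_comm t b inner w u))
      · rcases le_total (lv t b u w) (lv t b u v) with hA | hA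
        · rcases le_total (lv t b v w) (lv t b u v) with hB | hB
          · exact tri_sub hb hu hv hw h12 h13 h23 hA hB
          · -- max pair (v,w)
            have c1 : lv t b v u ≤ lv t b v w := by rw [lv_comm]; exact hB
            have c2 : lv t b w u ≤ lv t b v w := by rw [lv_comm]; exact le_trans hA hB
            rcases tri_sub hb hv hw hu h23 (Ne.symm h12) (Ne.symm h13) c1 c2 with h | h | h
            · exact Or.inr (Or.inl ((ccv_comm t b inner u v).trans h.symm))
            · exact Or.inr (Or.inr ((ccv_comm t b inner u w).trans h.symm))
            · exact Or.inl ((ccv_comm t b inner u v).trans (h.trans (ccv_comm t b inner w u)))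
        · rcases le_total (lv t b v w) (lv t b u w) with hB | hB
          · -- max pair (u,w)
            have c1 : lv t b w v ≤ lv t b u w := by rw [lv_comm]; exact hB
            rcases tri_sub hb hu hw hv h13 h12 (Ne.symm h23) hA c1 with h | h | h
            · exact Or.inl h.symm
            · exact Or.inr (Or.inr (h.trans (ccv_comm t b inner w v)))
            · exact Or.inr (Or.inl (h.trans (ccv_comm t b inner w v)))
          · -- max pair (v,w)
            have c1 : lv t b v u ≤ lv t b v w := by rw [lv_comm]; exact le_trans hA hB
            have c2 : lv t b w u ≤ lv t b v w := by rw [lv_comm]; exact hB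
            rcases tri_sub hb hv hw hu h23 (Ne.symm h12) (Ne.symm h13) c1 c2 with h | h | h
            · exact Or.inr (Or.inl ((ccv_comm t b inner u v).trans h.symm))
            · exact Or.inr (Or.inr ((ccv_comm t b inner u w).trans h.symm))
            · exact Or.inl ((ccv_comm t b inner u v).trans (h.trans (ccv_comm t b inner w u)))

lemma kadj (x : Fin 5) (hx : x ≠ 4) : kipas4.Adj 4 x := by
  rw [kipas4, SimpleGraph.fromEdgeSet_adj]
  refine ⟨?_, Ne.symm hx⟩
  fin_cases x <;> simp_all

lemma kadj01 : kipas4.Adj 0 1 := by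
  rw [kipas4, SimpleGraph.fromEdgeSet_adj]
  exact ⟨by simp, by decide⟩

lemma padj01 : path3.Adj 0 1 := by
  rw [path3, SimpleGraph.pathGraph_adj]; decide

lemma padj12 : path3.Adj 1 2 := by
  rw [path3, SimpleGraph.pathGraph_adj]; decide

lemma master (k s t b inner : ℕ) (hk : 0 < k) (hb : 0 < b) (hb4 : b ≤ 4)
    (hts : 2 * t ≤ s) (hti : 2 * t ≤ inner) (hik : inner < k) (hbs : s ≤ inner → b ≤ 2) :
    ∃ c : Fin (b * 5 ^ t) → Fin (b * 5 ^ t) → Fin k, IsGallai c ∧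
      (∀ i : Fin k, (i : ℕ) < s → ¬ HasMonoCopyIn c kipas4 i) ∧
      (∀ j : Fin k, s ≤ (j : ℕ) → ¬ HasMonoCopyIn c path3 j) := by
  set c : Fin (b * 5 ^ t) → Fin (b * 5 ^ t) → Fin k :=
    fun u v => ⟨ccv t b inner u.val v.val % k, Nat.mod_lt _ hk⟩ with hc
  have cval : ∀ u v : Fin (b * 5 ^ t), (c u v).val = ccv t b inner u.val v.val := by
    intro u v
    exact Nat.mod_eq_of_lt (lt_of_le_of_lt (ccv_le hb u.isLt v.isLt hti) hik)
  refine ⟨c, ⟨?_, ?_⟩, ?_, ?_⟩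
  · intro u v
    exact Fin.val_injective (by rw [cval, cval, ccv_comm])
  · rintro ⟨u, v, w, huv, huw, hvw, h1, h2, h3⟩
    rcases ccv_no_rainbow (inner := inner) hb u.isLt v.isLt w.isLt with h | h | h
    · exact h1 (Fin.val_injective (by rw [cval, cval]; exact h))
    · exact h2 (Fin.val_injective (by rw [cval, cval]; exact h))
    · exact h3 (Fin.val_injective (by rw [cval, cval]; exact h))
  · rintro i hi ⟨f, hinj, hmono⟩
    have e : ∀ x y : Fin 5, kipas4.Adj x y →
        ccv t b inner (f x).val (f y).val = (i : ℕ) := by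
      intro x y hxy
      rw [← cval, hmono x y hxy]
    by_cases hio : (f 4).val / b = (f 0).val / b
    · -- inner color: all star edges inner, pigeonhole on b ≤ 4
      have hiv : (i : ℕ) = inner := by
        have h40 := e 4 0 (kadj 0 (by decide))
        unfold ccv at h40
        rw [if_pos hio] at h40
        omega
      have hall : ∀ x : Fin 5, (f x).val / b = (f 4).val / b := by
        intro x
        by_cases hx4 : x = 4
        · rw [hx4]
        · have hadjx : kipas4.Adj 4 x := kadj x hx4
          have hex := e 4 x hadjx
          by_contra hne
          have hne' : (f 4).val / b ≠ (f x).val / b := fun h => hne h.symm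
          rw [ccv_of_ne hne'] at hex
          have h1 := (lv_spec hb (f 4).isLt (f x).isLt hne').1
          have h2 := pent_le_one (dq b (f 4).val (lv t b (f 4).val (f x).val))
            (dq b (f x).val (lv t b (f 4).val (f x).val))
          omega
      obtain ⟨x, y, hxy, hgxy⟩ := Fintype.exists_ne_map_eq_of_card_lt
        (fun x : Fin 5 => (⟨(f x).val % b, Nat.mod_lt _ hb⟩ : Fin b))
        (by simp; omega)
      have : (f x).val = (f y).val := by
        have hd : (f x).val / b = (f y).val / b := (hall x).trans (hall y).symm
        have hm : (f x).val % b = (f y).val % b := by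
          simpa using hgxy
        conv_lhs => rw [← Nat.div_add_mod (f x).val b]
        conv_rhs => rw [← Nat.div_add_mod (f y).val b]
        rw [hd, hm]
      exact hxy (hinj (Fin.val_injective this))
    · -- level color: use triangle {4,0,1}
      have h40 := e 4 0 (kadj 0 (by decide))
      rw [ccv_of_ne hio] at h40
      have hl40 := lv_spec hb (f 4).isLt (f 0).isLt hio
      have hp40 := pent_le_one (dq b (f 4).val (lv t b (f 4).val (f 0).val))
        (dq b (f 0).val (lv t b (f 4).val (f 0).val))
      have hivlt : (i : ℕ) < inner := by omega
      have h41ne : (f 4).val / b ≠ (f 1).val / b := by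
        intro h
        have := e 4 1 (kadj 1 (by decide))
        unfold ccv at this
        rw [if_pos h] at this
        omega
      have h01ne : (f 0).val / b ≠ (f 1).val / b := by
        intro h
        have := e 0 1 kadj01
        unfold ccv at this
        rw [if_pos h] at this
        omega
      have h41 := e 4 1 (kadj 1 (by decide))
      have h01 := e 0 1 kadj01
      rw [ccv_of_ne h41ne] at h41
      rw [ccv_of_ne h01ne] at h01
      have hl41 := lv_spec hb (f 4).isLt (f 1).isLt h41ne
      have hl01 := lv_spec hb (f 0).isLt (f 1).isLt h01ne
      have hp41 := pent_le_one (dq b (f 4).val (lv t b (f 4).val (f 1).val))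
        (dq b (f 1).val (lv t b (f 4).val (f 1).val))
      have hp01 := pent_le_one (dq b (f 0).val (lv t b (f 0).val (f 1).val))
        (dq b (f 1).val (lv t b (f 0).val (f 1).val))
      have hm2 : lv t b (f 4).val (f 1).val = lv t b (f 4).val (f 0).val := by omega
      have hm3 : lv t b (f 0).val (f 1).val = lv t b (f 4).val (f 0).val := by omega
      set m := lv t b (f 4).val (f 0).val with hmdef
      rw [hm2] at h41 hl41
      rw [hm3] at h01 hl01
      set A := dq b (f 4).val m with hA
      set B := dq b (f 0).val m with hB
      set C := dq b (f 1).val m with hC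
      have hAB5 : A / 5 = B / 5 := by
        have := hl40.2.2
        rw [dq_succ, dq_succ] at this
        exact this
      have hAC5 : A / 5 = C / 5 := by
        have := hl41.2.2
        rw [dq_succ, dq_succ] at this
        exact this
      have hBC5 : B / 5 = C / 5 := by
        have := hl01.2.2
        rw [dq_succ, dq_succ] at this
        exact this
      have hABne := hl40.2.1
      have hACne := hl41.2.1
      have hBCne := hl01.2.1
      have hpe1 : pent A B = pent A C := by omega
      have hpe2 : pent A B = pent B C := by omega
      have hx : (⟨A % 5, by omega⟩ : Fin 5) ≠ ⟨B % 5, by omega⟩ := by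
        intro h
        have := congrArg Fin.val h
        simp at this
        omega
      have hy : (⟨A % 5, by omega⟩ : Fin 5) ≠ ⟨C % 5, by omega⟩ := by
        intro h
        have := congrArg Fin.val h
        simp at this
        omega
      have hz : (⟨B % 5, by omega⟩ : Fin 5) ≠ ⟨C % 5, by omega⟩ := by
        intro h
        have := congrArg Fin.val h
        simp at this
        omega
      refine pent_tri ⟨A % 5, by omega⟩ ⟨B % 5, by omega⟩ ⟨C % 5, by omega⟩ hx hy hz ⟨?_, ?_⟩
      · simpa [← pent_mod] using hpe1
      · simpa [← pent_mod] using hpe2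
  · rintro j hj ⟨f, hinj, hmono⟩
    have e : ∀ x y : Fin 3, path3.Adj x y →
        ccv t b inner (f x).val (f y).val = (j : ℕ) := by
      intro x y hxy
      rw [← cval, hmono x y hxy]
    have e01 := e 0 1 padj01
    have e12 := e 1 2 padj12
    have inner01 : (f 0).val / b = (f 1).val / b := by
      by_contra hne
      rw [ccv_of_ne hne] at e01
      have h1 := (lv_spec hb (f 0).isLt (f 1).isLt hne).1
      have h2 := pent_le_one (dq b (f 0).val (lv t b (f 0).val (f 1).val))
        (dq b (f 1).val (lv t b (f 0).val (f 1).val))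
      omega
    have inner12 : (f 1).val / b = (f 2).val / b := by
      by_contra hne
      rw [ccv_of_ne hne] at e12
      have h1 := (lv_spec hb (f 1).isLt (f 2).isLt hne).1
      have h2 := pent_le_one (dq b (f 1).val (lv t b (f 1).val (f 2).val))
        (dq b (f 2).val (lv t b (f 1).val (f 2).val))
      omega
    have hjv : (j : ℕ) = inner := by
      unfold ccv at e01
      rw [if_pos inner01] at e01
      omega
    have hb2 : b ≤ 2 := hbs (by omega)
    obtain ⟨x, y, hxy, hgxy⟩ := Fintype.exists_ne_map_eq_of_card_lt
      (fun x : Fin 3 => (⟨(f x).val % b, Nat.mod_lt _ hb⟩ : Fin b))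
      (by simp; omega)
    have hall : ∀ x : Fin 3, (f x).val / b = (f 0).val / b := by
      intro x
      fin_cases x
      · rfl
      · exact inner01.symm
      · exact (inner12.symm.trans inner01.symm)
    have : (f x).val = (f y).val := by
      have hd : (f x).val / b = (f y).val / b := (hall x).trans (hall y).symm
      have hm : (f x).val % b = (f y).val % b := by
        simpa using hgxy
      conv_lhs => rw [← Nat.div_add_mod (f x).val b]
      conv_rhs => rw [← Nat.div_add_mod (f y).val b]
      rw [hd, hm]
    exact hxy (hinj (Fin.val_injective this))

/-- For `1 ≤ s < k` there is a Gallai `k`-coloring of the complete graph on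
`4·5^((s-1)/2)` (s odd) resp. `2·5^(s/2)` (s even) vertices with no monochromatic
`K̂₄` in any color `i < s` and no monochromatic `P₃` in any color `j ≥ s`. -/
theorem mixed_construction (k s : ℕ) (hk : 1 ≤ k) (hs1 : 1 ≤ s) (hsk : s < k) :
    ∃ c : Fin (if Even s then 2 * 5 ^ (s / 2) else 4 * 5 ^ ((s - 1) / 2)) →
        Fin (if Even s then 2 * 5 ^ (s / 2) else 4 * 5 ^ ((s - 1) / 2)) → Fin k,
      IsGallai c ∧
      (∀ i : Fin k, (i : ℕ) < s → ¬ HasMonoCopyIn c kipas4 i) ∧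
      (∀ j : Fin k, s ≤ (j : ℕ) → ¬ HasMonoCopyIn c path3 j) := by
  by_cases hse : Even s
  · rw [if_pos hse]
    exact master k s (s / 2) 2 s hk (by norm_num) (by norm_num)
      (by omega) (by omega) hsk (fun _ => le_refl 2)
  · rw [if_neg hse]
    exact master k s ((s - 1) / 2) 4 (s - 1) hk (by norm_num) (by norm_num)
      (by omega) (by omega) (by omega) (by omega)
end
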